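/- Let ℓ be a prime and 1 ≤ k ≤ ℓ-1. The space of SL₂(F_ℓ)-invariants in E_k = F_ℓ[X,Y]_k, under the action (P·g)(X,Y) = P(g·(X,Y)ᵗ), is zero. -/

import Mathlib

/-!
Over a finite field `K` of order `q`, an `SL₂(K)`-invariant `P` is constant, say `c`, on
`K² ∖ {0}`, because `SL₂(K)` acts transitively there; homogeneity of positive degree gives
`P(0) = 0`. Chevalley–Warning makes `∑_{v ∈ K²} P(v)` vanish since `deg P ≤ q - 1 < 2(q - 1)`,
while that sum is `(q² - 1) c = -c`. So `P` vanishes on `K²`, and a homogeneous polynomial of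
degree at most `q` vanishing on `K²` is zero.
-/

open MvPolynomial

noncomputable def matrixSubstAction {R : Type*} [CommRing R]
    (M : Matrix (Fin 2) (Fin 2) R) (P : MvPolynomial (Fin 2) R) : MvPolynomial (Fin 2) R :=
  MvPolynomial.aeval (fun i => ∑ j : Fin 2, MvPolynomial.C (M i j) * X j) P

open scoped Matrix

lemma Matrix.exists_det_eq_one_mulVec_eq {K : Type*} [Field K] {v : Fin 2 → K} (hv : v ≠ 0) :
    ∃ M : Matrix (Fin 2) (Fin 2) K, M.det = 1 ∧ M *ᵥ ![1, 0] = v := by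
  by_cases h0 : v 0 = 0
  · have h1 : v 1 ≠ 0 := fun h1 => hv (funext fun i => by fin_cases i <;> simp [h0, h1])
    refine ⟨!![0, -(v 1)⁻¹; v 1, 0], by simp [h1], ?_⟩
    funext i; fin_cases i <;> simp [h0]
  · refine ⟨!![v 0, 0; v 1, (v 0)⁻¹], by simp [h0], ?_⟩
    funext i; fin_cases i <;> simp

namespace MvPolynomial

lemma eval_matrixSubstAction {R : Type*} [CommRing R] (M : Matrix (Fin 2) (Fin 2) R)
    (P : MvPolynomial (Fin 2) R) (v : Fin 2 → R) :
    eval v (matrixSubstAction M P) = eval (M *ᵥ v) P := by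
  rw [matrixSubstAction, map_aeval]
  congr
  · ext; simp
  · funext i
    simp [Matrix.mulVec, dotProduct]

lemma eval_eq_of_forall_det_eq_one {K : Type*} [Field K] {P : MvPolynomial (Fin 2) K}
    (hinv : ∀ M : Matrix (Fin 2) (Fin 2) K, M.det = 1 → matrixSubstAction M P = P)
    {v : Fin 2 → K} (hv : v ≠ 0) : eval v P = eval ![1, 0] P := by
  obtain ⟨M, hM, rfl⟩ := Matrix.exists_det_eq_one_mulVec_eq hv
  rw [← eval_matrixSubstAction, hinv M hM]

lemma IsHomogeneous.eval_zero {R σ : Type*} [CommSemiring R] {P : MvPolynomial σ R} {k : ℕ}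
    (hP : P.IsHomogeneous k) (hk : k ≠ 0) : eval 0 P = 0 := by
  rw [MvPolynomial.eval_zero, constantCoeff_eq]
  exact hP.coeff_eq_zero (by simpa using hk.symm)

lemma sum_eval_eq_neg_of_eval_eq_of_ne_zero {K σ : Type*} [Field K] [Fintype K] [Fintype σ]
    [DecidableEq σ] [Nonempty σ] {P : MvPolynomial σ K} {c : K} (h0 : eval 0 P = 0)
    (hc : ∀ v ≠ 0, eval v P = c) : ∑ v, eval v P = -c := by
  classical
  have hcard : (Fintype.card (σ → K) : K) = 0 := by
    simp [zero_pow Fintype.card_ne_zero]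
  rw [Fintype.sum_eq_add_sum_compl 0, h0, zero_add,
    Finset.sum_congr rfl fun v hv => hc v (by simpa using hv), Finset.sum_const,
    Finset.card_compl, Finset.card_singleton, nsmul_eq_mul, Nat.cast_sub Fintype.card_pos, hcard]
  simp

end MvPolynomial

theorem eq_zero_of_isHomogeneous_of_forall_det_eq_one {K : Type*} [Field K] [Fintype K]
    {P : MvPolynomial (Fin 2) K} {k : ℕ} (hP : P.IsHomogeneous k) (hk1 : 1 ≤ k)
    (hk2 : k ≤ Fintype.card K - 1)
    (hinv : ∀ M : Matrix (Fin 2) (Fin 2) K, M.det = 1 → matrixSubstAction M P = P) :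
    P = 0 := by
  have h0 : eval 0 P = 0 := hP.eval_zero (by omega)
  have hsum : ∑ v, eval v P = 0 := by
    refine sum_eval_eq_zero P (hP.totalDegree_le.trans_lt ?_)
    have := Fintype.one_lt_card (α := K)
    simp only [Fintype.card_fin]
    omega
  have hc : eval ![1, 0] P = 0 := by
    rwa [sum_eval_eq_neg_of_eval_eq_of_ne_zero h0 fun v hv => eval_eq_of_forall_det_eq_one hinv hv,
      neg_eq_zero] at hsum
  refine hP.eq_zero_of_forall_eval_eq_zero_of_le_card (fun v => ?_) ?_
  · rcases eq_or_ne v 0 with rfl | hv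
    · exact h0
    · rw [eval_eq_of_forall_det_eq_one hinv hv, hc]
  · rw [Cardinal.mk_fintype]
    exact_mod_cast hk2.trans (Nat.sub_le _ 1)

/-- For a prime `ℓ` and `1 ≤ k ≤ ℓ - 1`, the space of `SL₂(F_ℓ)`-invariants
in `E_k = F_ℓ[X,Y]_k` is zero. -/
theorem invariants_homogeneous_eq_zero (ℓ : ℕ) (hℓ : ℓ.Prime) (k : ℕ)
    (hk1 : 1 ≤ k) (hk2 : k ≤ ℓ - 1)
    (P : MvPolynomial (Fin 2) (ZMod ℓ))
    (hP : P ∈ MvPolynomial.homogeneousSubmodule (Fin 2) (ZMod ℓ) k)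
    (hinv : ∀ M : Matrix (Fin 2) (Fin 2) (ZMod ℓ), M.det = 1 → matrixSubstAction M P = P) :
    P = 0 := by
  have : Fact ℓ.Prime := ⟨hℓ⟩
  exact eq_zero_of_isHomogeneous_of_forall_det_eq_one ((mem_homogeneousSubmodule k P).mp hP)
    hk1 (by rwa [ZMod.card]) hinv
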